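/- Let τ be a real number and let g : ℝ → ℝ be differentiable at every point of [τ, ∞) with g(t) > 0 and g'(t) > 0 for every t ≥ τ. Let f : ℝ → ℝ be a continuous, nonnegative, nondecreasing function such that (i) there exists T ∈ ℝ with f(t) = g(t) for all t ≥ T, and (ii) at every point t where f(t) > 0, the function f is differentiable at t and f'(t) ≤ g'(t). Then f(t) > 0 for all t > τ. -/

import Mathlib

/-! If `f` vanished somewhere to the right of `τ`, it would have a last zero `s > τ`, because
`f = g > 0` far out. On `[s, ∞)` the function `f` is positive except at `s`, so `f' ≤ g'` there
and `g - f` is nondecreasing; but `g - f` equals `g s > 0` at `s` and vanishes far out. -/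

open Set

theorem Continuous.exists_last_eq {α β : Type*} [ConditionallyCompleteLinearOrder α]
    [TopologicalSpace α] [OrderTopology α] [TopologicalSpace β] [T1Space β]
    {f : α → β} (hf : Continuous f) {c : β} {t₀ b : α} (h₀ : f t₀ = c)
    (hb : ∀ t, f t = c → t ≤ b) :
    ∃ s, t₀ ≤ s ∧ f s = c ∧ ∀ u, s < u → f u ≠ c := by
  have hZ : IsGreatest (f ⁻¹' {c}) (sSup (f ⁻¹' {c})) :=
    (isClosed_singleton.preimage hf).isGreatest_csSup ⟨t₀, h₀⟩ ⟨b, hb⟩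
  exact ⟨_, hZ.2 h₀, hZ.1, fun u hu hfu => (hZ.2 hfu).not_gt hu⟩

theorem Convex.monotoneOn_sub_of_deriv_le {D : Set ℝ} (hD : Convex ℝ D) {f g : ℝ → ℝ}
    (hf : ContinuousOn f D) (hg : ContinuousOn g D) (hf' : DifferentiableOn ℝ f (interior D))
    (hg' : DifferentiableOn ℝ g (interior D))
    (hle : ∀ x ∈ interior D, deriv f x ≤ deriv g x) : MonotoneOn (fun x => g x - f x) D := by
  refine monotoneOn_of_deriv_nonneg hD (hg.sub hf) (hg'.sub hf') fun x hx => ?_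
  have hD' : interior D ∈ nhds x := isOpen_interior.mem_nhds hx
  rw [deriv_fun_sub (hg'.differentiableAt hD') (hf'.differentiableAt hD'), sub_nonneg]
  exact hle x hx

theorem stmt_0_general (τ : ℝ) (f g : ℝ → ℝ)
    (hg_diff : ∀ t ∈ Set.Ici τ, DifferentiableAt ℝ g t)
    (hg_pos : ∀ t, τ ≤ t → 0 < g t)
    (hf_cont : Continuous f)
    (hf_nonneg : ∀ t, 0 ≤ f t)
    (hfg : ∃ T : ℝ, ∀ t, T ≤ t → f t = g t)
    (hf_diff : ∀ t, 0 < f t → DifferentiableAt ℝ f t ∧ deriv f t ≤ deriv g t) :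
    ∀ t, τ < t → 0 < f t := by
  intro t ht
  by_contra hft
  obtain ⟨T, hT⟩ := hfg
  have hzeros : ∀ u, f u = 0 → u ≤ max T τ := fun u hu => by
    by_contra! hlt
    have hgu : g u = 0 := hT u ((le_max_left T τ).trans hlt.le) ▸ hu
    exact (hg_pos u ((le_max_right T τ).trans hlt.le)).ne' hgu
  obtain ⟨s, hts, hfs, hnz⟩ :=
    hf_cont.exists_last_eq (le_antisymm (not_lt.1 hft) (hf_nonneg t)) hzeros
  have hτs : τ < s := ht.trans_le hts
  have hpos : ∀ u ∈ interior (Ici s), 0 < f u := fun u hu =>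
    (hf_nonneg u).lt_of_ne' (hnz u (interior_Ici.subset hu))
  have hg_Ici : ∀ u ∈ Ici s, DifferentiableAt ℝ g u := fun u hu =>
    hg_diff u (hτs.le.trans hu)
  have hmono : MonotoneOn (fun u => g u - f u) (Ici s) :=
    (convex_Ici s).monotoneOn_sub_of_deriv_le hf_cont.continuousOn
      (fun u hu => (hg_Ici u hu).continuousAt.continuousWithinAt)
      (fun u hu => (hf_diff u (hpos u hu)).1.differentiableWithinAt)
      (fun u hu => (hg_Ici u (interior_subset hu)).differentiableWithinAt)
      (fun u hu => (hf_diff u (hpos u hu)).2)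
  have hgf := hmono self_mem_Ici (le_max_left s T) (le_max_left s T)
  simp only [hfs, hT (max s T) (le_max_right s T), sub_self, sub_zero] at hgf
  exact (hg_pos s hτs.le).not_ge hgf

/-- Analytic core of the proof of boundedness of the pseudo-effective threshold:
if `g` is positive and strictly increasing (via positive derivative) on `[τ, ∞)`,
`f` is continuous, nonnegative, nondecreasing, eventually agrees with `g`, and
wherever `f > 0` it is differentiable with `f' ≤ g'`, then `f > 0` on `(τ, ∞)`. -/
theorem stmt_0 (τ : ℝ) (f g : ℝ → ℝ)
    (hg_diff : ∀ t ∈ Set.Ici τ, DifferentiableAt ℝ g t)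
    (hg_pos : ∀ t, τ ≤ t → 0 < g t)
    (hg'_pos : ∀ t, τ ≤ t → 0 < deriv g t)
    (hf_cont : Continuous f)
    (hf_nonneg : ∀ t, 0 ≤ f t)
    (hf_mono : Monotone f)
    (hfg : ∃ T : ℝ, ∀ t, T ≤ t → f t = g t)
    (hf_diff : ∀ t, 0 < f t → DifferentiableAt ℝ f t ∧ deriv f t ≤ deriv g t) :
    ∀ t, τ < t → 0 < f t :=
  stmt_0_general τ f g hg_diff hg_pos hf_cont hf_nonneg hfg hf_diff
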